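/- Suppose the magnetic form σ on 𝕋^{2N} is non-resonant in period τ. Then every τ-periodic solution of the magnetic system without potential, i.e. every smooth γ : ℝ → ℝ^{2N} with γ''(t) = −Y_σ(γ(t))·γ'(t), γ(t+τ) − γ(t) ∈ ℤ^{2N} constant, and γ'(t+τ) = γ'(t), is constant. In particular, there are no τ-periodic solutions with V = 0 in any class h ≠ 0. -/

import Mathlib

open Real Filter

noncomputable section

/-- Configuration space ℝ^{2N}: coordinate `(j, s)` is the `s`-th coordinate of the
`j`-th particle, with the Euclidean norm. -/
abbrev Conf (N : ℕ) := EuclideanSpace ℝ (Fin N × Fin 2)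

/-- The plane ℝ² with the Euclidean norm. -/
abbrev Plane := EuclideanSpace ℝ (Fin 2)

/-- The coordinates of the `j`-th particle. -/
def part {N : ℕ} (x : Conf N) (j : Fin N) : Plane := WithLp.toLp 2 (fun s => x (j, s))

/-- The lattice vector in ℝ^{2N} associated to `m ∈ ℤ^{2N}`. -/
def latVec {N : ℕ} (m : Fin N × Fin 2 → ℤ) : Conf N := WithLp.toLp 2 (fun i => (m i : ℝ))

/-- The lattice vector in ℝ² associated to `m ∈ ℤ²`. -/
def latVec2 (m : Fin 2 → ℤ) : Plane := WithLp.toLp 2 (fun s => (m s : ℝ))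

/-- A product magnetic form on 𝕋^{2N}, encoded by smooth ℤ²-periodic functions
`a j : ℝ² → ℝ`. -/
structure Magnetic (N : ℕ) where
  a : Fin N → Plane → ℝ
  smooth : ∀ j, ContDiff ℝ (⊤ : ℕ∞) (a j)
  periodic : ∀ j (x : Plane) (m : Fin 2 → ℤ), a j (x + latVec2 m) = a j x

/-- `σ` is non-resonant in period `τ`. -/
def Magnetic.NonResonant {N : ℕ} (σ : Magnetic N) (τ : ℝ) : Prop :=
  ∀ j : Fin N, ∃ k : ℤ, ∀ x : Plane,
    2 * π * k / τ < σ.a j x ∧ σ.a j x < 2 * π * (k + 1) / τ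

/-- The Lorentz force `Y_σ(x)·v`: block-diagonal action, the `j`-th 2×2 block being
`a_j(x_j)·J₀` with `J₀ = [[0,-1],[1,0]]`. -/
def lorentz {N : ℕ} (a : Fin N → Plane → ℝ) (x v : Conf N) : Conf N :=
  WithLp.toLp 2 (fun i => if i.2 = (0 : Fin 2) then -(a i.1 (part x i.1)) * v (i.1, 1)
           else (a i.1 (part x i.1)) * v (i.1, 0))

/-- A potential: smooth, τ-periodic in time and ℤ^{2N}-periodic in space. -/
structure Potential (N : ℕ) (τ : ℝ) where
  V : ℝ → Conf N → ℝ
  smooth : ContDiff ℝ (⊤ : ℕ∞) (Function.uncurry V)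
  periodic_t : ∀ t x, V (t + τ) x = V t x
  periodic_x : ∀ t (x : Conf N) (m : Fin N × Fin 2 → ℤ), V t (x + latVec m) = V t x

/-- A τ-periodic solution in class `h ∈ ℤ^{2N}` of
`γ'' = −Y_σ(γ)·γ' − ∇V_t(γ)`. -/
def IsSolution {N : ℕ} (σ : Magnetic N) {τ : ℝ} (P : Potential N τ)
    (h : Fin N × Fin 2 → ℤ) (γ : ℝ → Conf N) : Prop :=
  ContDiff ℝ (⊤ : ℕ∞) γ ∧
  (∀ t, deriv (deriv γ) t =
    - lorentz σ.a (γ t) (deriv γ t) - gradient (P.V t) (γ t)) ∧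
  (∀ t, γ (t + τ) = γ t + latVec h) ∧
  (∀ t, deriv γ (t + τ) = deriv γ t)

/-- Two solutions are identified iff they differ by a lattice translation. -/
def SameSol {N : ℕ} (γ₁ γ₂ : ℝ → Conf N) : Prop :=
  ∃ m : Fin N × Fin 2 → ℤ, ∀ t, γ₁ t = γ₂ t + latVec m

/-- Non-degeneracy of a τ-periodic solution: the only τ-periodic solution of the
linearized equation is `ξ ≡ 0`. -/
def NonDegenerate {N : ℕ} (σ : Magnetic N) {τ : ℝ} (P : Potential N τ)
    (γ : ℝ → Conf N) : Prop :=
  ∀ ξ : ℝ → Conf N, ContDiff ℝ (⊤ : ℕ∞) ξ →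
    (∀ t, deriv (deriv ξ) t =
      - fderiv ℝ (fun x => lorentz σ.a x (deriv γ t)) (γ t) (ξ t)
      - lorentz σ.a (γ t) (deriv ξ t)
      - fderiv ℝ (fun x => gradient (P.V t) x) (γ t) (ξ t)) →
    ξ τ = ξ 0 → deriv ξ τ = deriv ξ 0 → ∀ t, ξ t = 0

/-! In complex coordinates `z = x₀ + i x₁` each 2×2 block `a_j J₀` of the Lorentz force is
multiplication by `i a_j`, so the velocity `z` of the `j`-th particle solves `z' = -i g z` with
`g(t) = a_j(γ_j(t))`, hence `z(t) = z(0) exp(-i θ(t))` for `θ(t) = ∫₀ᵗ g`. Non-resonance puts `θ(τ)`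
strictly between two consecutive multiples of `2π`, so `exp(-i θ(τ)) ≠ 1` and `z(τ) = z(0)` forces
`z ≡ 0`. Thus `γ' ≡ 0`, `γ` is constant and its class `h` vanishes. -/

open Set

theorem mul_exp_eq_of_hasDerivAt {z θ θ' : ℝ → ℂ}
    (hθ : ∀ t, HasDerivAt θ (θ' t) t) (hz : ∀ t, HasDerivAt z (-θ' t * z t) t) (t : ℝ) :
    z t * Complex.exp (θ t) = z 0 * Complex.exp (θ 0) := by
  have hderiv : ∀ s, HasDerivAt (fun s => z s * Complex.exp (θ s)) 0 s := fun s =>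
    ((hz s).mul (hθ s).cexp).congr_deriv (by ring)
  exact is_const_of_deriv_eq_zero (fun s => (hderiv s).differentiableAt)
    (fun s => (hderiv s).deriv) t 0

theorem intervalIntegral_mem_Ioo {f : ℝ → ℝ} (hf : Continuous f) {a b c d : ℝ} (hab : a < b)
    (hcd : ∀ x, f x ∈ Ioo c d) : ∫ x in a..b, f x ∈ Ioo ((b - a) * c) ((b - a) * d) := by
  constructor
  · simpa using intervalIntegral.integral_lt_integral_of_continuousOn_of_le_of_exists_lt hab
      continuousOn_const hf.continuousOn (fun x _ => (hcd x).1.le)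
      ⟨a, left_mem_Icc.2 hab.le, (hcd a).1⟩
  · simpa using intervalIntegral.integral_lt_integral_of_continuousOn_of_le_of_exists_lt hab
      hf.continuousOn continuousOn_const (fun x _ => (hcd x).2.le)
      ⟨a, left_mem_Icc.2 hab.le, (hcd a).2⟩

theorem exp_ofReal_mul_I_ne_one {x : ℝ} {k : ℤ} (hx : x ∈ Ioo (2 * π * k) (2 * π * (k + 1))) :
    Complex.exp (x * Complex.I) ≠ 1 := by
  rw [Ne, Complex.exp_eq_one_iff]
  rintro ⟨n, hn⟩
  have hxn : x = 2 * π * n := Complex.ofReal_injective <|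
    mul_right_cancel₀ Complex.I_ne_zero (by push_cast; rw [hn]; ring)
  subst hxn
  have h1 : (k : ℝ) < n := by nlinarith [hx.1, Real.pi_pos]
  have h2 : (n : ℝ) < k + 1 := by nlinarith [hx.2, Real.pi_pos]
  norm_cast at h1 h2
  omega

theorem eq_zero_of_rotation_of_periodic {g : ℝ → ℝ} (hg : Continuous g) {τ : ℝ} (hτ : 0 < τ)
    {k : ℤ} (hk : ∀ t, g t ∈ Ioo (2 * π * k / τ) (2 * π * (k + 1) / τ)) {z : ℝ → ℂ}
    (hz : ∀ t, HasDerivAt z (-(g t * Complex.I) * z t) t) (hper : z τ = z 0) (t : ℝ) :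
    z t = 0 := by
  set θ : ℝ → ℝ := fun t => ∫ s in (0 : ℝ)..t, g s
  have hθ : ∀ t, HasDerivAt (fun t => (θ t : ℂ) * Complex.I) (g t * Complex.I) t := fun t =>
    ((hg.integral_hasStrictDerivAt 0 t).hasDerivAt.ofReal_comp).mul_const _
  have hconst (t : ℝ) : z t * Complex.exp (θ t * Complex.I) = z 0 := by
    simpa [θ] using mul_exp_eq_of_hasDerivAt hθ hz t
  have hrot : θ τ ∈ Ioo (2 * π * k) (2 * π * (k + 1)) := by
    simpa [mul_div_cancel₀ _ hτ.ne'] using intervalIntegral_mem_Ioo hg hτ hk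
  have hz0 : z 0 = 0 := by
    have h := hconst τ
    rw [hper, ← sub_eq_zero, ← mul_sub_one] at h
    exact (mul_eq_zero.1 h).resolve_right (sub_ne_zero.2 (exp_ofReal_mul_I_ne_one hrot))
  simpa [hz0, Complex.exp_ne_zero] using hconst t

section Particles

variable {N : ℕ}

def partComplex (x : Conf N) (j : Fin N) : ℂ := x (j, 0) + x (j, 1) * Complex.I

theorem partComplex_neg (x : Conf N) (j : Fin N) :
    partComplex (-x) j = -partComplex x j := by
  simp only [partComplex, PiLp.neg_apply, Complex.ofReal_neg]
  ring

theorem partComplex_lorentz (a : Fin N → Plane → ℝ) (x v : Conf N) (j : Fin N) :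
    partComplex (lorentz a x v) j = a j (part x j) * Complex.I * partComplex v j := by
  simp only [partComplex, lorentz, Fin.isValue, ↓reduceIte, one_ne_zero, Complex.ofReal_neg,
    Complex.ofReal_mul]
  linear_combination -(a j (part x j) * v (j, 1) : ℂ) * Complex.I_sq

theorem eq_zero_of_partComplex_eq_zero {x : Conf N} (hx : ∀ j, partComplex x j = 0) :
    x = 0 := by
  ext ⟨j, s⟩
  have h := hx j
  simp only [partComplex, Complex.ext_iff] at h
  fin_cases s
  · simpa using h.1
  · simpa using h.2

theorem HasDerivAt.partComplex {f : ℝ → Conf N} {f' : Conf N} {t : ℝ}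
    (hf : HasDerivAt f f' t) (j : Fin N) :
    HasDerivAt (fun t => _root_.partComplex (f t) j) (_root_.partComplex f' j) t := by
  have hcoord (s : Fin 2) : HasDerivAt (fun t => f t (j, s)) (f' (j, s)) t :=
    (EuclideanSpace.proj (𝕜 := ℝ) (j, s)).hasFDerivAt.comp_hasDerivAt t hf
  exact (hcoord 0).ofReal_comp.add ((hcoord 1).ofReal_comp.mul_const _)

theorem continuous_part (j : Fin N) : Continuous fun x : Conf N => part x j := by
  unfold part; fun_prop

theorem latVec_eq_zero_iff {m : Fin N × Fin 2 → ℤ} : latVec m = 0 ↔ m = 0 := by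
  simp [latVec, funext_iff]

theorem deriv_eq_zero_of_nonResonant {τ : ℝ} (hτ : 0 < τ) {σ : Magnetic N}
    (hσ : σ.NonResonant τ) {γ : ℝ → Conf N} (hγ : ContDiff ℝ 2 γ)
    (heq : ∀ t, deriv (deriv γ) t = -lorentz σ.a (γ t) (deriv γ t))
    (hper : deriv γ τ = deriv γ 0) (t : ℝ) : deriv γ t = 0 := by
  refine eq_zero_of_partComplex_eq_zero fun j => ?_
  obtain ⟨k, hk⟩ := hσ j
  have hg : Continuous fun t => σ.a j (part (γ t) j) :=
    (σ.smooth j).continuous.comp ((continuous_part j).comp hγ.continuous)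
  refine eq_zero_of_rotation_of_periodic (z := fun t => partComplex (deriv γ t) j) hg hτ
    (fun t => hk _) (fun t => ?_) (by rw [hper]) t
  have h := (hγ.differentiable_deriv_two t).hasDerivAt.partComplex j
  rwa [heq, partComplex_neg, partComplex_lorentz, ← neg_mul] at h

end Particles

theorem no_nonconstant_solutions_without_potential
    (N : ℕ) (τ : ℝ) (hτ : 0 < τ) (σ : Magnetic N) (hσ : σ.NonResonant τ)
    (γ : ℝ → Conf N) (hγ : ContDiff ℝ (⊤ : ℕ∞) γ)
    (heq : ∀ t, deriv (deriv γ) t = - lorentz σ.a (γ t) (deriv γ t))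
    (h : Fin N × Fin 2 → ℤ)
    (hlat : ∀ t, γ (t + τ) = γ t + latVec h)
    (hper : ∀ t, deriv γ (t + τ) = deriv γ t) :
    (∀ t : ℝ, γ t = γ 0) ∧ h = 0 := by
  have hv : ∀ t, deriv γ t = 0 :=
    deriv_eq_zero_of_nonResonant hτ hσ (hγ.of_le (by norm_cast)) heq
      (by simpa using hper 0)
  have hconst (t : ℝ) : γ t = γ 0 :=
    is_const_of_deriv_eq_zero (hγ.differentiable (by simp)) hv t 0
  refine ⟨hconst, latVec_eq_zero_iff.1 ?_⟩
  simpa [hconst τ] using (hlat 0).symm
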